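/- Let G be the 4-uniform hypergraph on vertex set {a,b} with hyperedges {aaaa, aaab, bbbb}, and let g = h_prod : F^4 → F be the product map g(x_1,x_2,x_3,x_4) = x_1 x_2 x_3 x_4 (i.e. d = 1). Then G is globally g-rigid. -/

import Mathlib

open scoped BigOperators

variable {𝕜 : Type*} [RCLike 𝕜]

/-- `g : (𝕜^ι)^k → 𝕜` is a polynomial map. -/
def IsPolyMap {k : ℕ} {ι : Type*} [Fintype ι] (g : (Fin k → ι → 𝕜) → 𝕜) : Prop :=
  ∃ P : MvPolynomial (Fin k × ι) 𝕜,
    ∀ x, g x = MvPolynomial.eval (fun q => x q.1 q.2) P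

/-- `g` is symmetric in its `k` arguments. -/
def IsSymMap {k : ℕ} {ι : Type*} (g : (Fin k → ι → 𝕜) → 𝕜) : Prop :=
  ∀ (σ : Equiv.Perm (Fin k)) (x : Fin k → ι → 𝕜), g (x ∘ σ) = g x

/-- The affine transformation `γ = (A, t)` applied to a point `x`. -/
def affApply {ι : Type*} [Fintype ι] (γ : Matrix ι ι 𝕜 × (ι → 𝕜)) (x : ι → 𝕜) : ι → 𝕜 :=
  γ.1.mulVec x + γ.2

/-- The stabilizer `Γ_g` of `g`: invertible affine transformations preserving `g`. -/
def Stab {k : ℕ} {ι : Type*} [Fintype ι] [DecidableEq ι] (g : (Fin k → ι → 𝕜) → 𝕜) :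
    Set (Matrix ι ι 𝕜 × (ι → 𝕜)) :=
  {γ | IsUnit γ.1 ∧ ∀ x : Fin k → ι → 𝕜, g (fun i => affApply γ (x i)) = g x}

/-- The `g`-measurement map of a `k`-uniform hypergraph with hyperedge set `E`. -/
def measMap {V : Type*} {k : ℕ} {ι : Type*} [Fintype ι]
    (E : Finset (Fin k → V)) (g : (Fin k → ι → 𝕜) → 𝕜)
    (p : V → ι → 𝕜) : E → 𝕜 :=
  fun e => g (fun i => p (e.1 i))

/-- The Lie algebra of the stabilizer of `g`: infinitesimal affine transformations
annihilated by the derivative of `g` everywhere. -/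
def lieStab {k : ℕ} {ι : Type*} [Fintype ι] (g : (Fin k → ι → 𝕜) → 𝕜) :
    Set (Matrix ι ι 𝕜 × (ι → 𝕜)) :=
  {γ | ∀ x : Fin k → ι → 𝕜, fderiv 𝕜 g x (fun i => γ.1.mulVec (x i) + γ.2) = 0}

/-- The dimension `d_{Γ_g}` of the stabilizer of `g` (dimension of its Lie algebra). -/
noncomputable def stabDim {k : ℕ} {ι : Type*} [Fintype ι]
    (g : (Fin k → ι → 𝕜) → 𝕜) : ℕ :=
  Module.finrank 𝕜 ↥(Submodule.span 𝕜 (lieStab g))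

/-- The set of trivial infinitesimal `g`-motions of a configuration `p`. -/
def trivMotions {V : Type*} {k : ℕ} {ι : Type*} [Fintype ι]
    (g : (Fin k → ι → 𝕜) → 𝕜) (p : V → ι → 𝕜) : Set (V → ι → 𝕜) :=
  {p' | ∃ γ ∈ lieStab g, p' = fun v => γ.1.mulVec (p v) + γ.2}

/-- The dimension of the space of trivial infinitesimal `g`-motions. -/
noncomputable def trivDim {V : Type*} {k : ℕ} {ι : Type*} [Fintype ι]
    (g : (Fin k → ι → 𝕜) → 𝕜) (p : V → ι → 𝕜) : ℕ :=
  Module.finrank 𝕜 ↥(Submodule.span 𝕜 (trivMotions g p))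

/-- `(G,p)` is infinitesimally `g`-rigid:
`dim ker J f_{g,G}(p) = dim triv_g(p)`. -/
noncomputable def InfRigid {V : Type*} [Fintype V] {k : ℕ} {ι : Type*} [Fintype ι]
    (E : Finset (Fin k → V)) (g : (Fin k → ι → 𝕜) → 𝕜) (p : V → ι → 𝕜) : Prop :=
  Module.finrank 𝕜 ↥(LinearMap.ker (fderiv 𝕜 (measMap E g) p).toLinearMap) = trivDim g p

/-- `(G,p)` is locally `g`-rigid. -/
def LocRigid {V : Type*} [Fintype V] {k : ℕ} {ι : Type*} [Fintype ι] [DecidableEq ι]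
    (E : Finset (Fin k → V)) (g : (Fin k → ι → 𝕜) → 𝕜) (p : V → ι → 𝕜) : Prop :=
  ∃ N : Set (V → ι → 𝕜), IsOpen N ∧ p ∈ N ∧
    ∀ q ∈ N, measMap E g q = measMap E g p →
      ∃ γ ∈ Stab g, q = fun v => affApply γ (p v)

/-- `(G,p)` is globally `g`-rigid. -/
def GlobRigid {V : Type*} {k : ℕ} {ι : Type*} [Fintype ι] [DecidableEq ι]
    (E : Finset (Fin k → V)) (g : (Fin k → ι → 𝕜) → 𝕜) (p : V → ι → 𝕜) : Prop :=
  ∀ q : V → ι → 𝕜, measMap E g q = measMap E g p →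
      ∃ γ ∈ Stab g, q = fun v => affApply γ (p v)

/-- A configuration is generic if the coordinates of its points are algebraically
independent over `ℚ`. -/
def GenericConf {V : Type*} {ι : Type*} (p : V → ι → 𝕜) : Prop :=
  AlgebraicIndependent ℚ (fun vi : V × ι => p vi.1 vi.2)

/-- A hypergraph is locally `g`-rigid if every generic framework is. -/
def HLocRigid {V : Type*} [Fintype V] {k : ℕ} {ι : Type*} [Fintype ι] [DecidableEq ι]
    (E : Finset (Fin k → V)) (g : (Fin k → ι → 𝕜) → 𝕜) : Prop :=
  ∀ p : V → ι → 𝕜, GenericConf p → LocRigid E g p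

/-- A hypergraph is globally `g`-rigid if every generic framework is. -/
def HGlobRigid {V : Type*} {k : ℕ} {ι : Type*} [Fintype ι] [DecidableEq ι]
    (E : Finset (Fin k → V)) (g : (Fin k → ι → 𝕜) → 𝕜) : Prop :=
  ∀ p : V → ι → 𝕜, GenericConf p → GlobRigid E g p

/-! For generic `p` we have `p a ≠ 0`. Comparing `q a ^ 4` with `p a ^ 4` and `q a ^ 3 q b` with
`p a ^ 3 p b` then shows `q = ζ • p` for a fourth root of unity `ζ`, and scaling by such a `ζ`
preserves the product of four coordinates. -/

theorem GenericConf.apply_ne_zero {V ι : Type*} {p : V → ι → 𝕜} (hp : GenericConf p)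
    (v : V) (i : ι) : p v i ≠ 0 := fun h =>
  hp.transcendental (v, i) (h ▸ isAlgebraic_zero)

theorem exists_pow_eq_one_of_pow_succ_eq_of_pow_mul_eq {K : Type*} [Field K] {n : ℕ}
    {a b A B : K} (ha : a ≠ 0) (h₁ : A ^ (n + 1) = a ^ (n + 1)) (h₂ : A ^ n * B = a ^ n * b) :
    ∃ ζ : K, ζ ^ (n + 1) = 1 ∧ A = ζ * a ∧ B = ζ * b := by
  refine ⟨A / a, by rw [div_pow, h₁, div_self (pow_ne_zero _ ha)], by field_simp,
    mul_left_cancel₀ (pow_ne_zero (n + 1) ha) ?_⟩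
  calc a ^ (n + 1) * B = A * (A ^ n * B) := by rw [← h₁]; ring
    _ = a ^ (n + 1) * (A / a * b) := by rw [h₂]; field_simp; ring

theorem affApply_smul_one_zero {ι : Type*} [Fintype ι] [DecidableEq ι] (ζ : 𝕜) (x : ι → 𝕜) :
    affApply ((ζ • 1 : Matrix ι ι 𝕜), 0) x = ζ • x := by
  simp [affApply, Matrix.smul_mulVec]

theorem smul_one_zero_mem_stab_prod {k : ℕ} {ι : Type*} [Fintype ι] [DecidableEq ι] (j : ι)
    (hk : k ≠ 0) {ζ : 𝕜} (hζ : ζ ^ k = 1) :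
    ((ζ • 1 : Matrix ι ι 𝕜), 0) ∈ Stab (fun x : Fin k → ι → 𝕜 => ∏ i, x i j) := by
  refine ⟨?_, fun x => ?_⟩
  · rw [Matrix.isUnit_iff_isUnit_det, Matrix.det_smul, Matrix.det_one, mul_one]
    exact (IsUnit.of_pow_eq_one hζ hk).pow _
  · simp [affApply_smul_one_zero, Finset.prod_mul_distrib, hζ]

/-- the 4-uniform hypergraph on two vertices `a = 0`, `b = 1` with
hyperedges `{aaaa, aaab, bbbb}` is globally `g`-rigid for the product map
`g = h_prod : 𝕜^4 → 𝕜` (here `d = 1`). -/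
theorem example_hypergraph_glob_rigid {𝕜 : Type*} [RCLike 𝕜] :
    HGlobRigid
      ({(fun _ => 0), ![0, 0, 0, 1], (fun _ => 1)} : Finset (Fin 4 → Fin 2))
      (fun x : Fin 4 → Fin 1 → 𝕜 => ∏ i, x i 0) := by
  intro p hp q hq
  have h₁ := congrFun hq ⟨fun _ => 0, by simp⟩
  have h₂ := congrFun hq ⟨![0, 0, 0, 1], by simp⟩
  simp only [measMap, Fin.prod_univ_four, Matrix.cons_val] at h₁ h₂
  obtain ⟨ζ, hζ, hqa, hqb⟩ := exists_pow_eq_one_of_pow_succ_eq_of_pow_mul_eq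
    (n := 3) (a := p 0 0) (b := p 1 0) (A := q 0 0) (B := q 1 0) (hp.apply_ne_zero 0 0)
    (by linear_combination h₁) (by linear_combination h₂)
  refine ⟨(ζ • 1, 0), smul_one_zero_mem_stab_prod 0 four_ne_zero hζ, ?_⟩
  funext v j
  fin_cases v <;> fin_cases j <;> simp [affApply_smul_one_zero, hqa, hqb]
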